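/- arXiv:1603.05131 — 5 statements merged into one kernel-verified Lean document; each statement's English description precedes it below -/
import Mathlib

section
/- For positive real numbers a₁, a₂, a₃, one has a₁a₂/(a₁+a₂) + a₂a₃/(a₂+a₃) + a₃a₁/(a₃+a₁) ≤ 3(a₁a₂ + a₂a₃ + a₃a₁) / (2(a₁+a₂+a₃)). -/
theorem stmt1 (a₁ a₂ a₃ : ℝ) (h₁ : 0 < a₁) (h₂ : 0 < a₂) (h₃ : 0 < a₃) :
    a₁*a₂/(a₁+a₂) + a₂*a₃/(a₂+a₃) + a₃*a₁/(a₃+a₁) ≤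
      3*(a₁*a₂ + a₂*a₃ + a₃*a₁) / (2*(a₁+a₂+a₃)) := by
  have p12 : 0 < a₁+a₂ := by linarith
  have p23 : 0 < a₂+a₃ := by linarith
  have p31 : 0 < a₃+a₁ := by linarith
  have ps : 0 < 2*(a₁+a₂+a₃) := by linarith
  rw [div_add_div _ _ (ne_of_gt p12) (ne_of_gt p23), div_add_div _ _ (by positivity) (ne_of_gt p31), div_le_div_iff₀ (by positivity) ps]
  nlinarith [sq_nonneg (a₁-a₂), sq_nonneg (a₂-a₃), sq_nonneg (a₃-a₁), sq_nonneg (a₁*a₂-a₂*a₃), sq_nonneg (a₂*a₃-a₃*a₁), sq_nonneg (a₃*a₁-a₁*a₂), mul_pos h₁ h₂, mul_pos h₂ h₃, mul_pos h₃ h₁, sq_nonneg (a₁+a₂+a₃), mul_pos (mul_pos h₁ h₂) h₃]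
end

section
/- Let a : Fin n → ℝ be positive with n ≥ 2. Then ∑ over all (n−1)-element subsets S of Fin n of (∏_{i∈S} aᵢ)/(∑_{i∈S} aᵢ) ≤ (n/(n−1)) · (∑ over all (n−1)-element subsets S of ∏_{i∈S} aᵢ) / (∑_{i=1}^n aᵢ). -/
/-! The `(n - 1)`-subsets are the complements `univ.erase i` of singletons. With `P = ∏ aⱼ`,
`T = ∑ aⱼ` and `σᵢ = T - aᵢ`, the `i`-th term on the left is `P / (aᵢ σᵢ) = (P / T) (aᵢ⁻¹ + σᵢ⁻¹)`,
while the right side is `(n / (n - 1)) (P / T) ∑ aᵢ⁻¹`. So the claim reduces to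
`∑ σᵢ⁻¹ ≤ (∑ aᵢ⁻¹) / (n - 1)`, which is the sum over `i` of the AM–HM inequalities
`σᵢ⁻¹ ≤ (∑_{j ≠ i} aⱼ⁻¹) / (n - 1)²`. -/

open Finset

namespace Finset

variable {ι K : Type*} [Field K] [LinearOrder K] [IsStrictOrderedRing K]

theorem inv_sum_le_sum_inv_div_card_sq {s : Finset ι} (hs : s.Nonempty) {a : ι → K}
    (ha : ∀ i ∈ s, 0 < a i) : (∑ i ∈ s, a i)⁻¹ ≤ (∑ i ∈ s, (a i)⁻¹) / (#s : K) ^ 2 := by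
  have hsedrakyan := sq_sum_div_le_sum_sq_div s (fun _ ↦ (1 : K)) ha
  simp only [sum_const, nsmul_eq_mul, mul_one, one_pow, one_div] at hsedrakyan
  rw [le_div_iff₀ (by positivity), ← div_eq_inv_mul]
  exact hsedrakyan

variable [Fintype ι] [DecidableEq ι]

theorem powersetCard_card_sub_one_univ [Nonempty ι] :
    powersetCard (Fintype.card ι - 1) (univ : Finset ι) = univ.image fun i ↦ univ.erase i := by
  ext S
  have hpos := Fintype.card_pos (α := ι)
  have : (∃ i, univ.erase i = S) ↔ #Sᶜ = 1 := by
    simp_rw [card_eq_one, ← compl_singleton, compl_eq_comm]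
  simp only [mem_powersetCard_univ, mem_image, mem_univ, true_and, this, card_compl]
  omega

theorem sum_powersetCard_card_sub_one_univ [Nonempty ι] {M : Type*} [AddCommMonoid M]
    (f : Finset ι → M) :
    ∑ S ∈ powersetCard (Fintype.card ι - 1) univ, f S = ∑ i, f (univ.erase i) := by
  rw [powersetCard_card_sub_one_univ, sum_image]
  intro i _ j _ h
  simpa using congrArg (·ᶜ) h

theorem sum_sum_erase_univ {R : Type*} [NonAssocRing R] (f : ι → R) :
    ∑ i, ∑ j ∈ univ.erase i, f j = (Fintype.card ι - 1 : R) * ∑ i, f i := by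
  simp_rw [sum_erase_eq_sub (mem_univ _), sum_sub_distrib, sum_const, card_univ, nsmul_eq_mul,
    sub_mul, one_mul]

theorem sum_inv_sum_erase_le {a : ι → K} (ha : ∀ i, 0 < a i) (hι : 2 ≤ Fintype.card ι) :
    ∑ i, (∑ j ∈ univ.erase i, a j)⁻¹ ≤ (∑ i, (a i)⁻¹) / (Fintype.card ι - 1) := by
  have : Nontrivial ι := Fintype.one_lt_card_iff_nontrivial.mp hι
  have hcard : (Fintype.card ι - 1 : K) ≠ 0 := by
    have : (2 : K) ≤ Fintype.card ι := by exact_mod_cast hι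
    linarith
  calc ∑ i, (∑ j ∈ univ.erase i, a j)⁻¹
      ≤ ∑ i, (∑ j ∈ univ.erase i, (a j)⁻¹) / (Fintype.card ι - 1) ^ 2 := by
        gcongr with i
        convert inv_sum_le_sum_inv_div_card_sq (univ_nontrivial.erase_nonempty (a := i))
          (fun j _ ↦ ha j) using 3
        rw [card_erase_of_mem (mem_univ i), card_univ, Nat.cast_pred Fintype.card_pos]
    _ = (∑ i, (a i)⁻¹) / (Fintype.card ι - 1) := by
        rw [← sum_div, sum_sum_erase_univ]
        field_simp

theorem prod_erase_div_sum_erase [Nontrivial ι] {a : ι → K} (ha : ∀ i, 0 < a i) (i : ι) :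
    (∏ j ∈ univ.erase i, a j) / (∑ j ∈ univ.erase i, a j) =
      (∏ j, a j) / (∑ j, a j) * ((a i)⁻¹ + (∑ j ∈ univ.erase i, a j)⁻¹) := by
  have hσ : 0 < ∑ j ∈ univ.erase i, a j :=
    sum_pos (fun j _ ↦ ha j) univ_nontrivial.erase_nonempty
  have hi := ha i
  rw [← prod_erase_mul _ _ (mem_univ i), ← sum_erase_add _ _ (mem_univ i)]
  field_simp

end Finset

theorem stmt3 (n : ℕ) (hn : 2 ≤ n) (a : Fin n → ℝ) (ha : ∀ i, 0 < a i) :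
    ∑ S ∈ Finset.univ.powersetCard (n-1), (∏ i ∈ S, a i) / (∑ i ∈ S, a i) ≤
      ((n:ℝ)/((n:ℝ)-1)) * (∑ S ∈ Finset.univ.powersetCard (n-1), ∏ i ∈ S, a i) / (∑ i, a i) := by
  have : Nontrivial (Fin n) := Fin.nontrivial_iff_two_le.mpr hn
  have reindex (f : Finset (Fin n) → ℝ) :
      ∑ S ∈ univ.powersetCard (n - 1), f S = ∑ i, f (univ.erase i) := by
    simpa using sum_powersetCard_card_sub_one_univ f
  have hprod (i : Fin n) : ∏ j ∈ univ.erase i, a j = (∏ j, a j) * (a i)⁻¹ := by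
    rw [← prod_erase_mul _ _ (mem_univ i), mul_inv_cancel_right₀ (ha i).ne']
  have hT : 0 < ∑ i, a i := sum_pos (fun i _ ↦ ha i) univ_nonempty
  have hP : 0 < ∏ i, a i := prod_pos fun i _ ↦ ha i
  have hn1 : (0 : ℝ) < n - 1 := by
    have : (2 : ℝ) ≤ n := by exact_mod_cast hn
    linarith
  rw [reindex, reindex]
  calc ∑ i, (∏ j ∈ univ.erase i, a j) / (∑ j ∈ univ.erase i, a j)
      = (∏ j, a j) / (∑ j, a j) * (∑ i, (a i)⁻¹ + ∑ i, (∑ j ∈ univ.erase i, a j)⁻¹) := by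
        simp_rw [prod_erase_div_sum_erase ha, ← mul_sum, sum_add_distrib]
    _ ≤ (∏ j, a j) / (∑ j, a j) * (∑ i, (a i)⁻¹ + (∑ i, (a i)⁻¹) / (n - 1)) := by
        gcongr
        have := sum_inv_sum_erase_le ha (by rwa [Fintype.card_fin])
        rwa [Fintype.card_fin] at this
    _ = _ := by
        simp_rw [hprod, ← mul_sum]
        field_simp
        ring
end

section
/- Let a₁, ..., aₙ be positive real numbers with n ≥ 2. Then ∑_{i<j} aᵢaⱼ/(aᵢ+aⱼ) ≤ (n / (2(a₁+⋯+aₙ))) · ∑_{i<j} aᵢaⱼ. -/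
/-!
Put `w i j = a i * a j / (a i + a j)` and `P i = ∑ j ≠ i, w i j`. By symmetry of `w` the left-hand
side is `(∑ i, P i) / 2`, and since `a i * a j = a i * w i j + a j * w j i`, the sum
`∑ i < j, a i * a j` equals `∑ i, a i * P i`. Each `w i k` is increasing in `a i`, so `P` and `a`
are similarly ordered and Chebyshev's sum inequality gives `(∑ P) * (∑ a) ≤ n * ∑ i, a i * P i`.
-/

open Finset

section PairSums

variable {ι M : Type*} [Fintype ι] [LinearOrder ι] [AddCommMonoid M]

theorem sum_sum_lt_add_swap (G : ι → ι → M) :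
    ∑ i, ∑ j ∈ univ.filter (fun j => i < j), (G i j + G j i) =
      ∑ i, ∑ j ∈ univ.erase i, G i j := by
  have hswap : ∑ i, ∑ j ∈ univ.filter (fun j => i < j), G j i =
      ∑ i, ∑ j ∈ univ.filter (fun j => j < i), G i j := by
    simp only [sum_filter]
    exact sum_comm
  have hsplit (i : ι) :
      univ.erase i = univ.filter (fun j => i < j) ∪ univ.filter (fun j => j < i) := by
    ext j
    simp [ne_comm, lt_or_lt_iff_ne]
  rw [sum_congr rfl fun i _ => sum_add_distrib, sum_add_distrib, hswap, ← sum_add_distrib]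
  refine sum_congr rfl fun i _ => ?_
  rw [hsplit, sum_union (disjoint_filter.2 fun j _ h => lt_asymm h)]

theorem two_nsmul_sum_sum_lt_of_symm {G : ι → ι → M} (hG : ∀ i j, G i j = G j i) :
    2 • ∑ i, ∑ j ∈ univ.filter (fun j => i < j), G i j = ∑ i, ∑ j ∈ univ.erase i, G i j := by
  rw [← sum_sum_lt_add_swap]
  simp only [smul_sum, two_nsmul, ← hG]

end PairSums

theorem monovary_sum_erase_of_symm {ι α β : Type*} [Fintype ι] [DecidableEq ι] [Preorder α]
    [AddCommMonoid β] [PartialOrder β] [IsOrderedAddMonoid β] {f : ι → α} {g : ι → ι → β}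
    (hsymm : ∀ i j, g i j = g j i) (hmono : ∀ i j k, f i < f j → g i k ≤ g j k) :
    Monovary (fun i => ∑ k ∈ univ.erase i, g i k) f := by
  intro i j hij
  have hne : j ≠ i := fun h => (h ▸ hij).false
  dsimp only
  rw [← add_sum_erase _ _ (mem_erase.2 ⟨hne, mem_univ j⟩),
    ← add_sum_erase _ _ (mem_erase.2 ⟨hne.symm, mem_univ i⟩), erase_right_comm, hsymm i j]
  exact add_le_add_right (sum_le_sum fun k _ => hmono i j k hij) _

theorem mul_div_add_le_mul_div_add {x x' y : ℝ} (hx : 0 < x) (hy : 0 < y) (hxx' : x ≤ x') :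
    x * y / (x + y) ≤ x' * y / (x' + y) := by
  rw [div_le_div_iff₀ (by positivity) (by linarith)]
  nlinarith [mul_nonneg (mul_nonneg hy.le hy.le) (sub_nonneg.2 hxx')]

theorem two_mul_sum_mul_sum_lt_mul_div_add_le {ι : Type*} [Fintype ι] [LinearOrder ι]
    (a : ι → ℝ) (ha : ∀ i, 0 < a i) :
    2 * (∑ i, a i) * ∑ i, ∑ j ∈ univ.filter (fun j => i < j), a i * a j / (a i + a j) ≤
      Fintype.card ι * ∑ i, ∑ j ∈ univ.filter (fun j => i < j), a i * a j := by
  set w : ι → ι → ℝ := fun i j => a i * a j / (a i + a j)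
  set P : ι → ℝ := fun i => ∑ j ∈ univ.erase i, w i j
  have hw_symm (i j : ι) : w i j = w j i := by simp only [w, mul_comm, add_comm]
  have hlhs : 2 * ∑ i, ∑ j ∈ univ.filter (fun j => i < j), w i j = ∑ i, P i := by
    simpa only [nsmul_eq_mul, Nat.cast_ofNat] using two_nsmul_sum_sum_lt_of_symm hw_symm
  have hrhs : ∑ i, ∑ j ∈ univ.filter (fun j => i < j), a i * a j = ∑ i, P i * a i := by
    calc ∑ i, ∑ j ∈ univ.filter (fun j => i < j), a i * a j
        = ∑ i, ∑ j ∈ univ.filter (fun j => i < j), (a i * w i j + a j * w j i) := by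
          refine sum_congr rfl fun i _ => sum_congr rfl fun j _ => ?_
          have : a i + a j ≠ 0 := (add_pos (ha i) (ha j)).ne'
          rw [← hw_symm i j]
          simp only [w]
          field_simp
      _ = ∑ i, P i * a i := by
          rw [sum_sum_lt_add_swap (fun i j => a i * w i j)]
          simp only [P, mul_comm, mul_sum]
  have hmono : Monovary P a := monovary_sum_erase_of_symm hw_symm fun i j k hij =>
    mul_div_add_le_mul_div_add (ha i) (ha k) hij.le
  calc 2 * (∑ i, a i) * ∑ i, ∑ j ∈ univ.filter (fun j => i < j), w i j
      = (∑ i, P i) * ∑ i, a i := by rw [← hlhs]; ring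
    _ ≤ Fintype.card ι * ∑ i, P i * a i := hmono.sum_mul_sum_le_card_mul_sum
    _ = _ := by rw [hrhs]

theorem stmt4_general (n : ℕ) (a : Fin n → ℝ) (ha : ∀ i, 0 < a i) :
    ∑ i, ∑ j ∈ Finset.univ.filter (fun j => i < j), a i * a j / (a i + a j) ≤
      ((n:ℝ) / (2 * ∑ i, a i)) * ∑ i, ∑ j ∈ Finset.univ.filter (fun j => i < j), a i * a j := by
  rcases isEmpty_or_nonempty (Fin n) with _ | _
  · simp [univ_eq_empty]
  have hS : 0 < 2 * ∑ i, a i := by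
    have := sum_pos (fun i _ => ha i) univ_nonempty
    linarith
  rw [div_mul_eq_mul_div, le_div_iff₀ hS, mul_comm]
  simpa only [Fintype.card_fin] using two_mul_sum_mul_sum_lt_mul_div_add_le a ha

theorem stmt4 (n : ℕ) (hn : 2 ≤ n) (a : Fin n → ℝ) (ha : ∀ i, 0 < a i) :
    ∑ i, ∑ j ∈ Finset.univ.filter (fun j => i < j), a i * a j / (a i + a j) ≤
      ((n:ℝ) / (2 * ∑ i, a i)) * ∑ i, ∑ j ∈ Finset.univ.filter (fun j => i < j), a i * a j :=
  stmt4_general n a ha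
end

section
/- Let a : Fin n → ℝ be positive and 1 ≤ k ≤ n. Then ∑ over all k-element subsets S of {1,...,n} of (∏_{i∈S} aᵢ)/(∑_{i∈S} aᵢ) ≤ (n/k) · (∑ over all k-element subsets S of ∏_{i∈S} aᵢ) / (∑_{i=1}^n aᵢ). -/
/-!
Write `P_S = ∏_{i∈S} aᵢ`, `s_S = ∑_{i∈S} aᵢ` and `A = ∑ᵢ aᵢ`. Multiplying the left side by `A`
splits each term `P_S / s_S · A` into `P_S + ∑_{j∉S} P_{S∪{j}} / s_S`; regrouping by
`T = S ∪ {j}`, the second part becomes `∑_{|T|=k+1} P_T ∑_{j∈T} 1 / s_{T∖j}`, while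
`(n - k) ∑_{|S|=k} P_S = ∑_{|T|=k+1} P_T ∑_{j∈T} 1 / aⱼ`. By Cauchy–Schwarz,
`k² / s_{T∖j} ≤ ∑_{i∈T∖j} 1 / aᵢ`, and summing over `j ∈ T` gives
`k ∑_{j∈T} 1 / s_{T∖j} ≤ ∑_{j∈T} 1 / aⱼ`. Hence `k · LHS · A ≤ k ∑ P_S + (n - k) ∑ P_S`.
-/

open Finset

section

variable {ι : Type*} [DecidableEq ι]

theorem Finset.sum_powersetCard_sum_sdiff_insert {M : Type*} [AddCommMonoid M] (u : Finset ι)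
    (k : ℕ) (f : Finset ι → ι → M) :
    ∑ S ∈ u.powersetCard k, ∑ j ∈ u \ S, f (insert j S) j =
      ∑ T ∈ u.powersetCard (k + 1), ∑ j ∈ T, f T j := by
  rw [sum_sigma', sum_sigma']
  refine sum_bij' (fun p _ => ⟨insert p.2 p.1, p.2⟩) (fun p _ => ⟨p.1.erase p.2, p.2⟩)
    ?_ ?_ ?_ ?_ fun _ _ => rfl
  · rintro ⟨S, j⟩ hp
    simp only [mem_sigma, mem_powersetCard, mem_sdiff] at hp ⊢
    obtain ⟨⟨hSu, rfl⟩, hju, hjS⟩ := hp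
    exact ⟨⟨insert_subset hju hSu, card_insert_of_notMem hjS⟩, mem_insert_self _ _⟩
  · rintro ⟨T, j⟩ hp
    simp only [mem_sigma, mem_powersetCard, mem_sdiff, mem_erase] at hp ⊢
    obtain ⟨⟨hTu, hTcard⟩, hjT⟩ := hp
    exact ⟨⟨(erase_subset _ _).trans hTu, by rw [card_erase_of_mem hjT, hTcard]; rfl⟩,
      hTu hjT, fun h => h.1 rfl⟩
  · rintro ⟨S, j⟩ hp
    simp only [mem_sigma, mem_sdiff] at hp
    simp [erase_insert hp.2.2]
  · rintro ⟨T, j⟩ hp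
    simp only [mem_sigma] at hp
    simp [insert_erase hp.2]

theorem Finset.sum_sum_erase_add_sum {M : Type*} [AddCommMonoid M] (s : Finset ι) (f : ι → M) :
    ∑ j ∈ s, ∑ i ∈ s.erase j, f i + ∑ i ∈ s, f i = s.card • ∑ i ∈ s, f i := by
  rw [← sum_add_distrib, ← sum_const]
  exact sum_congr rfl fun j hj => sum_erase_add s f hj

theorem mul_sum_inv_sum_erase_le_sum_inv {T : Finset ι} {k : ℕ} (hT : T.card = k + 1)
    {a : ι → ℝ} (ha : ∀ i ∈ T, 0 < a i) :
    (k : ℝ) * ∑ j ∈ T, (∑ i ∈ T.erase j, a i)⁻¹ ≤ ∑ j ∈ T, (a j)⁻¹ := by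
  rcases k.eq_zero_or_pos with rfl | hk
  · simpa using sum_nonneg fun j hj => (inv_pos.2 (ha j hj)).le
  have titu : ∀ j ∈ T, (k : ℝ) ^ 2 / ∑ i ∈ T.erase j, a i ≤ ∑ i ∈ T.erase j, (a i)⁻¹ := by
    intro j hj
    simpa [card_erase_of_mem hj, hT] using
      sq_sum_div_le_sum_sq_div (T.erase j) (fun _ => (1 : ℝ))
        fun i hi => ha i (mem_of_mem_erase hi)
  have count := sum_sum_erase_add_sum T fun i => (a i)⁻¹
  rw [hT, nsmul_eq_mul, Nat.cast_add, Nat.cast_one] at count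
  refine le_of_mul_le_mul_left ?_ (Nat.cast_pos.2 hk : (0 : ℝ) < k)
  calc (k : ℝ) * (k * ∑ j ∈ T, (∑ i ∈ T.erase j, a i)⁻¹)
      = ∑ j ∈ T, (k : ℝ) ^ 2 / ∑ i ∈ T.erase j, a i := by
        rw [← mul_assoc, ← sq, mul_sum]; rfl
    _ ≤ ∑ j ∈ T, ∑ i ∈ T.erase j, (a i)⁻¹ := sum_le_sum titu
    _ = k * ∑ j ∈ T, (a j)⁻¹ := by linarith

theorem mul_sum_prod_div_sum_erase_le {T : Finset ι} {k : ℕ} (hT : T.card = k + 1)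
    {a : ι → ℝ} (ha : ∀ i ∈ T, 0 < a i) :
    (k : ℝ) * ∑ j ∈ T, (∏ i ∈ T, a i) / ∑ i ∈ T.erase j, a i ≤
      ∑ j ∈ T, ∏ i ∈ T.erase j, a i := by
  have h : ∀ j ∈ T, ∏ i ∈ T.erase j, a i = (∏ i ∈ T, a i) * (a j)⁻¹ := fun j hj => by
    rw [← prod_erase_mul T a hj, mul_inv_cancel_right₀ (ha j hj).ne']
  simp_rw [div_eq_mul_inv]
  rw [← mul_sum, sum_congr rfl h, ← mul_sum, mul_left_comm]
  exact mul_le_mul_of_nonneg_left (mul_sum_inv_sum_erase_le_sum_inv hT ha)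
    (prod_nonneg fun i hi => (ha i hi).le)

theorem sum_powersetCard_prod_div_sum_mul_sum (u : Finset ι) {k : ℕ} (hk : 0 < k) {a : ι → ℝ}
    (ha : ∀ i ∈ u, 0 < a i) :
    (∑ S ∈ u.powersetCard k, (∏ i ∈ S, a i) / ∑ i ∈ S, a i) * ∑ i ∈ u, a i =
      ∑ S ∈ u.powersetCard k, ∏ i ∈ S, a i +
        ∑ T ∈ u.powersetCard (k + 1), ∑ j ∈ T, (∏ i ∈ T, a i) / ∑ i ∈ T.erase j, a i := by
  rw [sum_mul, ← sum_powersetCard_sum_sdiff_insert, ← sum_add_distrib]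
  refine sum_congr rfl fun S hS => ?_
  obtain ⟨hSu, hSk⟩ := mem_powersetCard.1 hS
  have hs : ∑ i ∈ S, a i ≠ 0 :=
    (sum_pos (fun i hi => ha i (hSu hi)) (card_pos.1 (hSk ▸ hk))).ne'
  have h : ∀ j ∈ u \ S, (∏ i ∈ insert j S, a i) / ∑ i ∈ (insert j S).erase j, a i =
      (∏ i ∈ S, a i) / (∑ i ∈ S, a i) * a j := fun j hj => by
    rw [erase_insert (mem_sdiff.1 hj).2, prod_insert (mem_sdiff.1 hj).2]; ring
  rw [sum_congr rfl h, ← mul_sum, ← sum_sdiff hSu, mul_add, div_mul_cancel₀ _ hs, add_comm]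

theorem card_sub_mul_sum_powersetCard_prod {R : Type*} [CommRing R] (u : Finset ι) (k : ℕ)
    (a : ι → R) :
    ((u.card : R) - k) * ∑ S ∈ u.powersetCard k, ∏ i ∈ S, a i =
      ∑ T ∈ u.powersetCard (k + 1), ∑ j ∈ T, ∏ i ∈ T.erase j, a i := by
  rw [← sum_powersetCard_sum_sdiff_insert, mul_sum]
  refine sum_congr rfl fun S hS => ?_
  obtain ⟨hSu, rfl⟩ := mem_powersetCard.1 hS
  rw [sum_congr rfl fun j hj => by rw [erase_insert (mem_sdiff.1 hj).2], sum_const,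
    card_sdiff_of_subset hSu, nsmul_eq_mul, Nat.cast_sub (card_le_card hSu)]

end

theorem stmt5 (n k : ℕ) (hk : 1 ≤ k) (hkn : k ≤ n) (a : Fin n → ℝ) (ha : ∀ i, 0 < a i) :
    ∑ S ∈ Finset.univ.powersetCard k, (∏ i ∈ S, a i) / (∑ i ∈ S, a i) ≤
      ((n:ℝ)/(k:ℝ)) * (∑ S ∈ Finset.univ.powersetCard k, ∏ i ∈ S, a i) / (∑ i, a i) := by
  have hA : 0 < ∑ i, a i := sum_pos (fun i _ => ha i) (univ_nonempty_iff.2 ⟨⟨0, by omega⟩⟩)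
  have expand := sum_powersetCard_prod_div_sum_mul_sum univ hk fun i _ => ha i
  have count := card_sub_mul_sum_powersetCard_prod univ k a
  have bound := sum_le_sum (s := (univ : Finset (Fin n)).powersetCard (k + 1)) fun T hT =>
    mul_sum_prod_div_sum_erase_le (k := k) (mem_powersetCard.1 hT).2 fun i _ => ha i
  rw [card_univ, Fintype.card_fin] at count
  rw [← mul_sum] at bound
  rw [le_div_iff₀ hA, div_mul_eq_mul_div, le_div_iff₀ (by positivity), expand]
  linarith
end

section
/- Let a : Fin n → ℝ be positive, n ≥ 2, with ∑ aᵢ = 1, and let 1 ≤ k < n. Then ∑ over all (k+1)-element subsets S of {1,...,n} of ∑ over all k-element subsets T of S of (∏_{i∈S} aᵢ)/(∑_{i∈T} aᵢ) ≤ ((n−k)/k) · ∑ over all k-element subsets S of ∏_{i∈S} aᵢ. -/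
/-!
Write each pair `T ⊂ S` with `#S = k + 1` as `S = insert j T`, `j ∉ T`. Then
`∏ S / ∑ T = a j * (∏ T / ∑ T)`, and the AM-HM inequality `k ^ 2 ≤ (∑ T) (∑_{i ∈ T} 1 / a i)`
bounds `∏ T / ∑ T` by `e_{k-1}(T) / k ^ 2`, where `e_{k-1}(T) = ∑_{i ∈ T} ∏_{T \ {i}} a`.
Double counting the chains `U ⊂ T` with `#U = k - 1` then shows
`∑_T (∑_{j ∉ T} a j) e_{k-1}(T) = (n - k) k e_k`, which gives the bound `(n - k) / k * e_k`.
-/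

open Finset

section DoubleCounting

variable {α M : Type*} [DecidableEq α] [AddCommMonoid M]

theorem sum_powersetCard_of_card_eq_succ {S : Finset α} {k : ℕ} (hS : #S = k + 1)
    (G : Finset α → M) : ∑ T ∈ S.powersetCard k, G T = ∑ i ∈ S, G (S.erase i) := by
  have himage : S.powersetCard k = S.image S.erase := by
    ext T
    simp only [mem_powersetCard, mem_image]
    constructor
    · rintro ⟨hTS, hT⟩
      obtain ⟨i, hiT, rfl⟩ := exists_eq_insert_iff.2 ⟨hTS, by omega⟩
      exact ⟨i, mem_insert_self i T, erase_insert hiT⟩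
    · rintro ⟨i, hi, rfl⟩
      exact ⟨erase_subset i S, by rw [card_erase_of_mem hi, hS, Nat.add_sub_cancel]⟩
  rw [himage, sum_image S.erase_injOn]

variable [Fintype α]

theorem sum_powersetCard_succ_sum_mem (m : ℕ) (F : Finset α → α → M) :
    ∑ T ∈ univ.powersetCard (m + 1), ∑ i ∈ T, F T i =
      ∑ U ∈ univ.powersetCard m, ∑ j ∈ Uᶜ, F (insert j U) j := by
  rw [sum_sigma', sum_sigma']
  refine sum_nbij' (fun p => ⟨p.1.erase p.2, p.2⟩) (fun p => ⟨insert p.2 p.1, p.2⟩)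
    ?_ ?_ ?_ ?_ ?_ <;> rintro ⟨T, i⟩ h <;>
    simp only [mem_sigma, mem_powersetCard_univ, mem_compl] at h ⊢
  · simp [card_erase_of_mem h.2, h.1]
  · simp [card_insert_of_notMem h.2, h.1]
  · simp [insert_erase h.2]
  · simp [erase_insert h.2]
  · simp [insert_erase h.2]

theorem sum_powersetCard_succ_sum_powersetCard (k : ℕ) (G : Finset α → Finset α → M) :
    ∑ S ∈ univ.powersetCard (k + 1), ∑ T ∈ S.powersetCard k, G S T =
      ∑ T ∈ univ.powersetCard k, ∑ j ∈ Tᶜ, G (insert j T) T := by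
  rw [sum_congr rfl fun S hS =>
    sum_powersetCard_of_card_eq_succ (mem_powersetCard_univ.1 hS) (G S),
    sum_powersetCard_succ_sum_mem]
  refine sum_congr rfl fun T _ => sum_congr rfl fun j hj => ?_
  rw [erase_insert (mem_compl.1 hj)]

end DoubleCounting

section SymmetricSums

variable {α R : Type*} [Fintype α] [DecidableEq α]

theorem succ_mul_sum_powersetCard_prod [CommSemiring R] (m : ℕ) (a : α → R) :
    (m + 1 : R) * ∑ T ∈ univ.powersetCard (m + 1), ∏ i ∈ T, a i =
      ∑ U ∈ univ.powersetCard m, (∏ i ∈ U, a i) * ∑ j ∈ Uᶜ, a j := by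
  calc (m + 1 : R) * ∑ T ∈ univ.powersetCard (m + 1), ∏ i ∈ T, a i
      = ∑ T ∈ univ.powersetCard (m + 1), ∑ _i ∈ T, ∏ l ∈ T, a l := by
        rw [mul_sum]
        refine sum_congr rfl fun T hT => ?_
        rw [sum_const, mem_powersetCard_univ.1 hT, nsmul_eq_mul, Nat.cast_succ]
    _ = ∑ U ∈ univ.powersetCard m, ∑ j ∈ Uᶜ, ∏ l ∈ insert j U, a l :=
        sum_powersetCard_succ_sum_mem m _
    _ = ∑ U ∈ univ.powersetCard m, (∏ i ∈ U, a i) * ∑ j ∈ Uᶜ, a j := by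
        refine sum_congr rfl fun U _ => ?_
        rw [mul_sum]
        exact sum_congr rfl fun j hj => by rw [prod_insert (mem_compl.1 hj), mul_comm]

theorem sum_powersetCard_sum_compl_mul_sum_prod_erase [CommRing R] (m : ℕ) (a : α → R) :
    ∑ T ∈ univ.powersetCard (m + 1), (∑ j ∈ Tᶜ, a j) * ∑ i ∈ T, ∏ l ∈ T.erase i, a l =
      ((Fintype.card α : R) - (m + 1)) *
        ((m + 1) * ∑ T ∈ univ.powersetCard (m + 1), ∏ i ∈ T, a i) := by
  rw [succ_mul_sum_powersetCard_prod, mul_sum]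
  calc ∑ T ∈ univ.powersetCard (m + 1), (∑ j ∈ Tᶜ, a j) * ∑ i ∈ T, ∏ l ∈ T.erase i, a l
      = ∑ T ∈ univ.powersetCard (m + 1), ∑ i ∈ T, (∑ j ∈ Tᶜ, a j) * ∏ l ∈ T.erase i, a l :=
        sum_congr rfl fun T _ => mul_sum _ _ _
    _ = ∑ U ∈ univ.powersetCard m, ∑ i ∈ Uᶜ,
          (∑ j ∈ (insert i U)ᶜ, a j) * ∏ l ∈ (insert i U).erase i, a l :=
        sum_powersetCard_succ_sum_mem m _
    _ = _ := by
      refine sum_congr rfl fun U hU => ?_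
      have hm : m ≤ Fintype.card α := mem_powersetCard_univ.1 hU ▸ card_le_univ U
      have hterm : ∀ i ∈ Uᶜ, (∑ j ∈ (insert i U)ᶜ, a j) * ∏ l ∈ (insert i U).erase i, a l =
          ((∑ j ∈ Uᶜ, a j) - a i) * ∏ l ∈ U, a l := fun i hi => by
        rw [compl_insert, erase_insert (mem_compl.1 hi), sum_erase_eq_sub hi]
      rw [sum_congr rfl hterm, ← sum_mul, sum_sub_distrib, sum_const, card_compl,
        mem_powersetCard_univ.1 hU, nsmul_eq_mul, Nat.cast_sub hm]
      ring

end SymmetricSums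

theorem prod_div_sum_le_sum_prod_erase_div_card_sq {ι R : Type*} [DecidableEq ι] [Field R]
    [LinearOrder R] [IsStrictOrderedRing R] (s : Finset ι) {a : ι → R}
    (ha : ∀ i ∈ s, 0 < a i) :
    (∏ i ∈ s, a i) / ∑ i ∈ s, a i ≤ (∑ i ∈ s, ∏ j ∈ s.erase i, a j) / (#s : R) ^ 2 := by
  rcases s.eq_empty_or_nonempty with rfl | hs
  · simp
  have hsum_prod_erase : ∑ i ∈ s, ∏ j ∈ s.erase i, a j = (∏ i ∈ s, a i) * ∑ i ∈ s, 1 / a i := by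
    rw [mul_sum]
    refine sum_congr rfl fun i hi => ?_
    rw [← mul_prod_erase s a hi, mul_comm (a i), mul_one_div, mul_div_cancel_right₀ _ (ha i hi).ne']
  -- AM-HM, as Titu's lemma with numerators `1`: `#s ^ 2 / ∑ a ≤ ∑ 1 / a`.
  have htitu := sq_sum_div_le_sum_sq_div s (fun _ => (1 : R)) ha
  simp only [sum_const, nsmul_eq_mul, mul_one, one_pow] at htitu
  have hcard : (0 : R) < #s := by exact_mod_cast hs.card_pos
  rw [hsum_prod_erase, le_div_iff₀ (by positivity)]
  calc (∏ i ∈ s, a i) / (∑ i ∈ s, a i) * (#s : R) ^ 2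
      = (∏ i ∈ s, a i) * ((#s : R) ^ 2 / ∑ i ∈ s, a i) := by ring
    _ ≤ (∏ i ∈ s, a i) * ∑ i ∈ s, 1 / a i :=
      mul_le_mul_of_nonneg_left htitu (prod_nonneg fun i hi => (ha i hi).le)

theorem stmt8_general (n k : ℕ) (hk : 1 ≤ k)
    (a : Fin n → ℝ) (ha : ∀ i, 0 < a i) :
    ∑ S ∈ Finset.univ.powersetCard (k+1), ∑ T ∈ S.powersetCard k,
        (∏ i ∈ S, a i) / (∑ i ∈ T, a i) ≤
      (((n:ℝ)-(k:ℝ))/(k:ℝ)) * ∑ S ∈ Finset.univ.powersetCard k, ∏ i ∈ S, a i := by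
  obtain ⟨m, rfl⟩ := Nat.exists_eq_add_of_le' hk
  rw [sum_powersetCard_succ_sum_powersetCard]
  calc ∑ T ∈ univ.powersetCard (m + 1), ∑ j ∈ Tᶜ, (∏ i ∈ insert j T, a i) / ∑ i ∈ T, a i
      ≤ ∑ T ∈ univ.powersetCard (m + 1), ∑ j ∈ Tᶜ,
          a j * ((∑ i ∈ T, ∏ l ∈ T.erase i, a l) / ((m + 1 : ℕ) : ℝ) ^ 2) := by
        gcongr with T hT j hj
        rw [prod_insert (mem_compl.1 hj), mul_div_assoc, ← mem_powersetCard_univ.1 hT]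
        exact mul_le_mul_of_nonneg_left
          (prod_div_sum_le_sum_prod_erase_div_card_sq T fun i _ => ha i) (ha j).le
    _ = (∑ T ∈ univ.powersetCard (m + 1), (∑ j ∈ Tᶜ, a j) * ∑ i ∈ T, ∏ l ∈ T.erase i, a l) /
          ((m + 1 : ℕ) : ℝ) ^ 2 := by
        simp only [sum_div, sum_mul, mul_div_assoc]
    _ = _ := by
        rw [sum_powersetCard_sum_compl_mul_sum_prod_erase, Fintype.card_fin]
        field_simp
        push_cast
        ring

theorem stmt8 (n k : ℕ) (hn : 2 ≤ n) (hk : 1 ≤ k) (hkn : k < n)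
    (a : Fin n → ℝ) (ha : ∀ i, 0 < a i) (hsum : ∑ i, a i = 1) :
    ∑ S ∈ Finset.univ.powersetCard (k+1), ∑ T ∈ S.powersetCard k,
        (∏ i ∈ S, a i) / (∑ i ∈ T, a i) ≤
      (((n:ℝ)-(k:ℝ))/(k:ℝ)) * ∑ S ∈ Finset.univ.powersetCard k, ∏ i ∈ S, a i :=
  stmt8_general n k hk a ha
end
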